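/- Let n ≥ 2 and let Ω be a bounded open subset of ℝⁿ with Lipschitz boundary. Then there exists a constant c ∈ (0,∞) such that for all x' ∈ ∂Ω and all s ∈ (0, 1/e): ∫_{∂Ω \ 𝔹ₙ(x',s)} |x'−y|^{−(n−1)} dσ_y ≤ c·|ln s|. -/

import Mathlib

open Real MeasureTheory
open scoped MeasureTheory RealInnerProductSpace

def HasLipschitzBoundary {n : ℕ} (Ω : Set (EuclideanSpace ℝ (Fin n))) : Prop :=
  ∀ p ∈ frontier Ω,
    ∃ (ν : EuclideanSpace ℝ (Fin n)) (γ : EuclideanSpace ℝ (Fin n) → ℝ)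
      (L : NNReal) (V : Set (EuclideanSpace ℝ (Fin n))),
      ‖ν‖ = 1 ∧ LipschitzWith L γ ∧ IsOpen V ∧ p ∈ V ∧
      Ω ∩ V = {x ∈ V | ⟪x - p, ν⟫ < γ (x - p - ⟪x - p, ν⟫ • ν)}

open Metric Set Filter Topology Module
open scoped NNReal ENNReal

/-! Near each of its points, `∂Ω` lies on the graph of a Lipschitz function over a hyperplane, so
Lipschitz images of `(n-1)`-balls and compactness give `σ(∂Ω ∩ B(x, r)) ≤ C r^(n-1)` for all
`x ∈ ∂Ω`, `r > 0`. Cut `∂Ω \ B(x', s)` into the dyadic annuli `2^k s ≤ |x' - y| < 2^(k+1) s`: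
on each, the integrand is at most `(2^k s)^(1-n)` while `σ` is at most `C (2^(k+1) s)^(n-1)`, so
every annulus contributes at most `2^(n-1) C`, and only `log₂ (diam ∂Ω / s) + 1 ≲ |ln s|` of them
meet `∂Ω`. -/

section Dyadic

variable {X : Type*} [PseudoMetricSpace X] [MeasurableSpace X] {μ : Measure X} {S : Set X}
  {x : X} {d : ℝ} {C : ℝ≥0}

lemma lintegral_dist_rpow_neg_annulus_le (hd : 0 ≤ d)
    (hμ : ∀ r, 0 < r → μ (S ∩ closedBall x r) ≤ C * ENNReal.ofReal (r ^ d)) {R : ℝ} (hR : 0 < R) :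
    ∫⁻ y in S ∩ (ball x (2 * R) \ ball x R), ENNReal.ofReal (dist x y ^ (-d)) ∂μ
      ≤ C * ENNReal.ofReal (2 ^ d) := by
  have hle : ∀ y ∈ S ∩ (ball x (2 * R) \ ball x R),
      ENNReal.ofReal (dist x y ^ (-d)) ≤ ENNReal.ofReal (R ^ (-d)) := by
    rintro y ⟨-, -, hy⟩
    rw [mem_ball, not_lt, dist_comm] at hy
    exact ENNReal.ofReal_le_ofReal (rpow_le_rpow_of_nonpos hR hy (neg_nonpos.2 hd))
  calc ∫⁻ y in S ∩ (ball x (2 * R) \ ball x R), ENNReal.ofReal (dist x y ^ (-d)) ∂μ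
      ≤ ∫⁻ _ in S ∩ (ball x (2 * R) \ ball x R), ENNReal.ofReal (R ^ (-d)) ∂μ :=
        setLIntegral_mono measurable_const hle
    _ = ENNReal.ofReal (R ^ (-d)) * μ (S ∩ (ball x (2 * R) \ ball x R)) := setLIntegral_const _ _
    _ ≤ ENNReal.ofReal (R ^ (-d)) * (C * ENNReal.ofReal ((2 * R) ^ d)) := by
        gcongr
        exact (measure_mono (inter_subset_inter_right _
          (sdiff_subset.trans ball_subset_closedBall))).trans (hμ _ (by positivity))
    _ = C * ENNReal.ofReal (2 ^ d) := by
        rw [mul_left_comm, ← ENNReal.ofReal_mul (by positivity), mul_rpow zero_le_two hR.le,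
          rpow_neg hR.le, mul_comm (2 ^ d), inv_mul_cancel_left₀ (rpow_pos_of_pos hR d).ne']

lemma lintegral_dist_rpow_neg_ball_diff_ball_le (hd : 0 ≤ d)
    (hμ : ∀ r, 0 < r → μ (S ∩ closedBall x r) ≤ C * ENNReal.ofReal (r ^ d)) {s : ℝ} (hs : 0 < s)
    (N : ℕ) :
    ∫⁻ y in S ∩ (ball x (2 ^ N * s) \ ball x s), ENNReal.ofReal (dist x y ^ (-d)) ∂μ
      ≤ N * (C * ENNReal.ofReal (2 ^ d)) := by
  induction N with
  | zero => simp
  | succ N ih =>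
    have hsplit : S ∩ (ball x (2 ^ (N + 1) * s) \ ball x s) ⊆
        S ∩ (ball x (2 ^ N * s) \ ball x s) ∪
          S ∩ (ball x (2 * (2 ^ N * s)) \ ball x (2 ^ N * s)) := by
      rw [← inter_union_distrib_left, pow_succ', mul_assoc]
      gcongr
      intro y ⟨hy, hys⟩
      by_cases hyN : y ∈ ball x (2 ^ N * s)
      · exact .inl ⟨hyN, hys⟩
      · exact .inr ⟨hy, hyN⟩
    calc _ ≤ _ := lintegral_mono_set hsplit
      _ ≤ _ := lintegral_union_le _ _ _
      _ ≤ N * (C * ENNReal.ofReal (2 ^ d)) + C * ENNReal.ofReal (2 ^ d) :=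
          add_le_add ih (lintegral_dist_rpow_neg_annulus_le hd hμ (by positivity))
      _ = (N + 1 : ℕ) * (C * ENNReal.ofReal (2 ^ d)) := by push_cast; ring

lemma integral_dist_rpow_neg_le_logb [OpensMeasurableSpace X] (hd : 0 ≤ d)
    (hμ : ∀ r, 0 < r → μ (S ∩ closedBall x r) ≤ C * ENNReal.ofReal (r ^ d)) {s D : ℝ}
    (hs : 0 < s) (hsD : s ≤ D) (hSD : S ⊆ closedBall x D) :
    ∫ y in S \ ball x s, dist x y ^ (-d) ∂μ ≤ C * 2 ^ d * (logb 2 (D / s) + 1) := by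
  set N := ⌊logb 2 (D / s)⌋₊ + 1
  have hlog : 0 ≤ logb 2 (D / s) := logb_nonneg one_lt_two ((one_le_div hs).2 hsD)
  have hN : (N : ℝ) ≤ logb 2 (D / s) + 1 := by
    simp only [N, Nat.cast_add, Nat.cast_one]
    gcongr
    exact Nat.floor_le hlog
  have hDN : D < 2 ^ N * s := by
    rw [← div_lt_iff₀ hs, ← rpow_natCast]
    exact (logb_lt_iff_lt_rpow one_lt_two (div_pos (hs.trans_le hsD) hs)).1
      (by simpa [N] using Nat.lt_floor_add_one (logb 2 (D / s)))
  have hsub : S \ ball x s ⊆ S ∩ (ball x (2 ^ N * s) \ ball x s) :=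
    fun y ⟨hy, hys⟩ ↦ ⟨hy, (closedBall_subset_ball hDN) (hSD hy), hys⟩
  have hnonneg : ∀ y, 0 ≤ dist x y ^ (-d) := fun y ↦ rpow_nonneg dist_nonneg _
  rw [← ENNReal.ofReal_le_ofReal_iff (by positivity)]
  calc ENNReal.ofReal (∫ y in S \ ball x s, dist x y ^ (-d) ∂μ)
      ≤ ∫⁻ y in S \ ball x s, ENNReal.ofReal (dist x y ^ (-d)) ∂μ := by
        -- no integrability needed: otherwise the Bochner integral is `0`
        refine (Real.ofReal_le_enorm _).trans ((enorm_integral_le_lintegral_enorm _).trans_eq ?_)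
        simp_rw [Real.enorm_of_nonneg (hnonneg _)]
    _ ≤ ∫⁻ y in S ∩ (ball x (2 ^ N * s) \ ball x s), ENNReal.ofReal (dist x y ^ (-d)) ∂μ :=
        lintegral_mono_set hsub
    _ ≤ N * (C * ENNReal.ofReal (2 ^ d)) := lintegral_dist_rpow_neg_ball_diff_ball_le hd hμ hs N
    _ = ENNReal.ofReal (C * 2 ^ d * N) := by
        rw [ENNReal.ofReal_mul (by positivity), ENNReal.ofReal_mul (by positivity),
          ENNReal.ofReal_natCast, ENNReal.ofReal_coe_nnreal]
        ring
    _ ≤ ENNReal.ofReal (C * 2 ^ d * (logb 2 (D / s) + 1)) := by gcongr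

end Dyadic

lemma IsCompact.exists_measure_inter_closedBall_le {X : Type*} [PseudoMetricSpace X]
    [MeasurableSpace X] (μ : Measure X) {K : Set X} (hK : IsCompact K) {d : ℝ} (hd : 0 ≤ d)
    (hloc : ∀ p ∈ K, ∃ V ∈ 𝓝 p, ∃ C : ℝ≥0, ∀ x ∈ K, ∀ r, 0 < r →
      μ (K ∩ V ∩ closedBall x r) ≤ C * ENNReal.ofReal (r ^ d)) :
    ∃ C : ℝ≥0, ∀ x ∈ K, ∀ r, 0 < r → μ (K ∩ closedBall x r) ≤ C * ENNReal.ofReal (r ^ d) := by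
  choose V hV C hC using hloc
  obtain ⟨t, ht⟩ := hK.elim_nhds_subcover' (fun p hp ↦ interior (V p hp))
    (fun p hp ↦ interior_mem_nhds.2 (hV p hp))
  obtain ⟨δ, hδ, hleb⟩ := lebesgue_number_lemma_of_metric hK
    (c := fun i : t ↦ interior (V i i.1.2)) (fun _ ↦ isOpen_interior)
    (ht.trans (iUnion₂_subset fun i hi ↦ subset_iUnion_of_subset ⟨i, hi⟩ subset_rfl))
  set C₀ := t.sup fun i ↦ C i i.2
  have hsmall : ∀ x ∈ K, ∀ r, 0 < r → r < δ →
      μ (K ∩ closedBall x r) ≤ C₀ * ENNReal.ofReal (r ^ d) := by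
    intro x hx r hr hrδ
    obtain ⟨i, hi⟩ := hleb x hx
    have hball : closedBall x r ⊆ V i i.1.2 :=
      (closedBall_subset_ball hrδ).trans (hi.trans interior_subset)
    calc μ (K ∩ closedBall x r) = μ (K ∩ V i i.1.2 ∩ closedBall x r) := by
          rw [inter_assoc, inter_eq_right.2 hball]
      _ ≤ C i i.1.2 * ENNReal.ofReal (r ^ d) := hC i i.1.2 x hx r hr
      _ ≤ C₀ * ENNReal.ofReal (r ^ d) := by
          gcongr
          exact Finset.le_sup (f := fun i : K ↦ C i i.2) i.2
  have hfin : μ K ≠ ∞ := by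
    obtain ⟨s, hsK, hs, hKs⟩ := finite_cover_balls_of_compact hK (half_pos hδ)
    have hcover : K ⊆ ⋃ z ∈ s, K ∩ closedBall z (δ / 2) := fun y hy ↦ by
      obtain ⟨z, hz, hyz⟩ := mem_iUnion₂.1 (hKs hy)
      exact mem_iUnion₂.2 ⟨z, hz, hy, ball_subset_closedBall hyz⟩
    refine ne_top_of_le_ne_top (measure_biUnion_lt_top hs fun z hz ↦ ?_).ne (measure_mono hcover)
    exact (hsmall z (hsK hz) _ (half_pos hδ) (half_lt_self hδ)).trans_lt (by finiteness)
  set a := (δ ^ d).toNNReal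
  have ha : 0 < a := Real.toNNReal_pos.2 (rpow_pos_of_pos hδ d)
  refine ⟨C₀ + (μ K).toNNReal / a, fun x hx r hr ↦ ?_⟩
  rcases lt_or_ge r δ with hrδ | hδr
  · exact (hsmall x hx r hr hrδ).trans (by gcongr; exact le_self_add)
  · calc μ (K ∩ closedBall x r) ≤ μ K := measure_mono inter_subset_left
      _ = ((μ K).toNNReal / a : ℝ≥0) * ENNReal.ofReal (δ ^ d) := by
          rw [ENNReal.ofReal, ← ENNReal.coe_mul, div_mul_cancel₀ _ ha.ne',
            ENNReal.coe_toNNReal hfin]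
      _ ≤ (C₀ + (μ K).toNNReal / a : ℝ≥0) * ENNReal.ofReal (r ^ d) := by
          gcongr
          exact le_add_self

lemma frontier_inter_subset_setOf_eq {X α : Type*} [TopologicalSpace X] [LinearOrder α]
    [TopologicalSpace α] [OrderClosedTopology α] {Ω V : Set X} {φ ψ : X → α} (hΩ : IsOpen Ω)
    (hV : IsOpen V) (hφ : Continuous φ) (hψ : Continuous ψ) (h : Ω ∩ V = {x ∈ V | φ x < ψ x}) :
    frontier Ω ∩ V ⊆ {x | φ x = ψ x} := by
  rintro y ⟨hy, hyV⟩
  have hyΩ : y ∉ Ω := (hΩ.frontier_eq ▸ hy).2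
  have hlt : ¬ φ y < ψ y := by
    intro hlt
    have hy' : y ∈ {x ∈ V | φ x < ψ x} := ⟨hyV, hlt⟩
    exact hyΩ (h ▸ hy').1
  have hgt : ¬ ψ y < φ y := by
    intro hgt
    obtain ⟨z, ⟨hzV, hz⟩, hzΩ⟩ := mem_closure_iff_nhds.1 (frontier_subset_closure hy) _
      ((hV.inter (isOpen_lt hψ hφ)).mem_nhds ⟨hyV, hgt⟩)
    have hz' : z ∈ Ω ∩ V := ⟨hzΩ, hzV⟩
    rw [h] at hz'
    exact lt_asymm hz hz'.2
  exact le_antisymm (not_lt.1 hgt) (not_lt.1 hlt)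

lemma exists_hausdorffMeasure_closedBall_eq (F : Type*) [NormedAddCommGroup F]
    [NormedSpace ℝ F] [FiniteDimensional ℝ F] [MeasurableSpace F] [BorelSpace F] :
    ∃ C : ℝ≥0, ∀ (x : F) (r : ℝ), 0 ≤ r →
      μH[finrank ℝ F] (closedBall x r) = C * ENNReal.ofReal (r ^ finrank ℝ F) := by
  refine ⟨(μH[finrank ℝ F] (closedBall (0 : F) 1)).toNNReal, fun x r hr ↦ ?_⟩
  rw [Measure.addHaar_closedBall' _ _ hr, ENNReal.coe_toNNReal measure_closedBall_lt_top.ne,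
    mul_comm]

section LipschitzGraph

variable {E : Type*} [NormedAddCommGroup E] [InnerProductSpace ℝ E] [FiniteDimensional ℝ E]
  [MeasurableSpace E] [BorelSpace E]

lemma exists_hausdorffMeasure_lipschitzGraph_inter_closedBall_le {ν : E} (hν : ‖ν‖ = 1)
    {γ : E → ℝ} {L : ℝ≥0} (hγ : LipschitzWith L γ) (p : E) :
    ∃ C : ℝ≥0, ∀ (x : E) (r : ℝ), 0 ≤ r →
      μH[(finrank ℝ E : ℝ) - 1] ({y | ⟪y - p, ν⟫ = γ (y - p - ⟪y - p, ν⟫ • ν)} ∩ closedBall x r)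
        ≤ C * ENNReal.ofReal (r ^ ((finrank ℝ E : ℝ) - 1)) := by
  set H := (ℝ ∙ ν)ᗮ
  have hH : (finrank ℝ H : ℝ) = finrank ℝ E - 1 := by
    have := (ℝ ∙ ν).finrank_add_finrank_orthogonal
    rw [finrank_span_singleton (by rintro rfl; simp at hν)] at this
    rw [← this]
    push_cast
    ring
  set P := H.orthogonalProjectionOnto
  have hP : ∀ w, (P w : E) = w - ⟪w, ν⟫ • ν := fun w ↦ by
    rw [← H.starProjection_apply, Submodule.starProjection_orthogonal_val,
      Submodule.starProjection_unit_singleton ℝ hν, real_inner_comm]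
  set g : H → E := fun u ↦ p + (u + γ u • ν)
  have hg : LipschitzWith (1 + L) g := by
    refine LipschitzWith.of_dist_le_mul fun u v ↦ ?_
    have hγuv : |γ u - γ v| ≤ L * ‖u - v‖ := by
      simpa [Real.dist_eq, dist_eq_norm] using hγ.dist_le_mul u v
    calc dist (g u) (g v) = ‖(u - v : E) + (γ u - γ v) • ν‖ := by
          rw [dist_eq_norm]
          congr 1
          simp only [g, sub_smul]
          abel
      _ ≤ ‖u - v‖ + |γ u - γ v| := by
          grw [norm_add_le, norm_smul, hν, mul_one, Real.norm_eq_abs, ← AddSubgroupClass.coe_sub,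
            Submodule.coe_norm]
      _ ≤ (1 + L : ℝ≥0) * dist u v := by
          rw [dist_eq_norm]
          push_cast
          linarith
  have hgP : ∀ y, ⟪y - p, ν⟫ = γ (y - p - ⟪y - p, ν⟫ • ν) → g (P (y - p)) = y := by
    intro y hy
    simp only [g, hP]
    rw [← hy]
    abel
  obtain ⟨C, hC⟩ := exists_hausdorffMeasure_closedBall_eq H
  refine ⟨(1 + L) ^ ((finrank ℝ E : ℝ) - 1) * C, fun x r hr ↦ ?_⟩
  have hsub : {y | ⟪y - p, ν⟫ = γ (y - p - ⟪y - p, ν⟫ • ν)} ∩ closedBall x r ⊆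
      g '' closedBall (P (x - p)) r := by
    rintro y ⟨hy, hyx⟩
    refine ⟨P (y - p), ?_, hgP y hy⟩
    rw [mem_closedBall, dist_eq_norm, ← map_sub, sub_sub_sub_cancel_right]
    exact (P.le_of_opNorm_le H.orthogonalProjectionOnto_norm_le _).trans
      (by simpa [dist_eq_norm] using hyx)
  have hd : 0 ≤ (finrank ℝ E : ℝ) - 1 := hH ▸ Nat.cast_nonneg _
  calc _ ≤ μH[(finrank ℝ E : ℝ) - 1] (g '' closedBall (P (x - p)) r) := measure_mono hsub
    _ ≤ ((1 + L : ℝ≥0) : ℝ≥0∞) ^ ((finrank ℝ E : ℝ) - 1) *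
          μH[(finrank ℝ E : ℝ) - 1] (closedBall (P (x - p)) r) :=
        hg.hausdorffMeasure_image_le hd _
    _ = _ := by
        rw [← hH, hC _ _ hr, ← rpow_natCast, ENNReal.coe_mul,
          ENNReal.coe_rpow_of_nonneg _ (hH ▸ hd)]
        ring

end LipschitzGraph

lemma exists_hausdorffMeasure_frontier_inter_closedBall_le {n : ℕ} (hn : 1 ≤ n)
    {Ω : Set (EuclideanSpace ℝ (Fin n))} (hΩo : IsOpen Ω) (hΩb : Bornology.IsBounded Ω)
    (hlip : HasLipschitzBoundary Ω) :
    ∃ C : ℝ≥0, ∀ x ∈ frontier Ω, ∀ r, 0 < r →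
      μH[(n : ℝ) - 1] (frontier Ω ∩ closedBall x r) ≤ C * ENNReal.ofReal (r ^ ((n : ℝ) - 1)) := by
  have hK : IsCompact (frontier Ω) := Metric.isCompact_of_isClosed_isBounded isClosed_frontier
    (hΩb.closure.subset frontier_subset_closure)
  refine hK.exists_measure_inter_closedBall_le _ (by simpa using hn) fun p hp ↦ ?_
  obtain ⟨ν, γ, L, V, hν, hγ, hV, hpV, hΩV⟩ := hlip p hp
  obtain ⟨C, hC⟩ := exists_hausdorffMeasure_lipschitzGraph_inter_closedBall_le hν hγ p
  have hgraph := frontier_inter_subset_setOf_eq hΩo hV (by fun_prop)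
    (hγ.continuous.comp (by fun_prop)) hΩV
  refine ⟨V, hV.mem_nhds hpV, C, fun x _ r hr ↦ ?_⟩
  simpa using (measure_mono (inter_subset_inter_left _ hgraph)).trans (hC x r hr.le)

lemma logb_two_div_add_one_le {D s : ℝ} (hD : 1 ≤ D) (hs : 0 < s) (hse : s < exp (-1)) :
    logb 2 (D / s) + 1 ≤ ((log D + 1) / log 2 + 1) * |log s| := by
  have hlogs : log s < -1 := by simpa using log_lt_log hs hse
  have hlog2 : 0 < log 2 := log_pos one_lt_two
  have hlogD : 0 ≤ log D := log_nonneg hD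
  rw [abs_of_neg (by linarith), logb, log_div (by positivity) hs.ne']
  field_simp
  nlinarith

theorem stmt_10 (n : ℕ) (hn : 2 ≤ n) (Ω : Set (EuclideanSpace ℝ (Fin n)))
    (hΩo : IsOpen Ω) (hΩb : Bornology.IsBounded Ω) (hlip : HasLipschitzBoundary Ω) :
    ∃ c : ℝ, 0 < c ∧ ∀ x' ∈ frontier Ω, ∀ s ∈ Set.Ioo (0 : ℝ) (Real.exp (-1)),
      (∫ y in frontier Ω \ Metric.ball x' s,
          dist x' y ^ (-((n : ℝ) - 1)) ∂(μH[(n : ℝ) - 1])) ≤ c * |Real.log s| := by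
  have hd : 0 ≤ (n : ℝ) - 1 := by
    have : (2 : ℝ) ≤ n := by exact_mod_cast hn
    linarith
  obtain ⟨C, hC⟩ := exists_hausdorffMeasure_frontier_inter_closedBall_le (by omega) hΩo hΩb hlip
  obtain ⟨D₀, hD₀⟩ := Metric.isBounded_iff.1 (hΩb.closure.subset frontier_subset_closure)
  set D := max D₀ 1
  set A := C * 2 ^ ((n : ℝ) - 1) * ((log D + 1) / log 2 + 1)
  have hA : 0 ≤ A := mul_nonneg (by positivity) (add_nonneg (div_nonneg
    (add_nonneg (log_nonneg (le_max_right _ _)) zero_le_one) (log_pos one_lt_two).le) zero_le_one)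
  refine ⟨A + 1, by positivity, fun x hx s ⟨hs, hse⟩ ↦ ?_⟩
  have hs1 : s ≤ 1 := hse.le.trans (exp_le_one_iff.2 (by norm_num))
  calc ∫ y in frontier Ω \ ball x s, dist x y ^ (-((n : ℝ) - 1)) ∂μH[(n : ℝ) - 1]
      ≤ C * 2 ^ ((n : ℝ) - 1) * (logb 2 (D / s) + 1) :=
        integral_dist_rpow_neg_le_logb hd (hC x hx) hs (hs1.trans (le_max_right _ _))
          fun y hy ↦ mem_closedBall.2 ((hD₀ hy hx).trans (le_max_left _ _))
    _ ≤ C * 2 ^ ((n : ℝ) - 1) * (((log D + 1) / log 2 + 1) * |log s|) := by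
        gcongr
        exact logb_two_div_add_one_le (le_max_right _ _) hs hse
    _ = A * |log s| := (mul_assoc _ _ _).symm
    _ ≤ (A + 1) * |log s| := by gcongr; linarith
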